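/- arXiv:1011.3507 — 2 statements merged into one kernel-verified Lean document; each statement's English description precedes it below -/
import Mathlib

section
/- Let C be a triangulated category, and let T : X → A → B → X[1] and T' : X' → A' → B' → X'[1] be distinguished triangles such that Hom_C(B, A'[1]) = 0. Then any morphism g : X → X' can be completed to a morphism of triangles, i.e. there exist h : A → A' and i : B → B' such that (g, h, i) commutes with all the maps of T and T'. Moreover, if in addition Hom_C(B, A') = 0, then h is uniquely determined by g. -/
/-!
The composite `g ≫ a' : X ⟶ A'` extends along `a` because the obstruction to doing so,
`b ≫ (g ≫ a')⟦1⟧'`, lies in `Hom(B, A'⟦1⟧) = 0`; the third component then exists by the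
axiom completing a commutative square to a morphism of distinguished triangles.
Two extensions `h₁, h₂` agree on `a`, so `h₁ - h₂` factors through `f : A ⟶ B` and vanishes
when `Hom(B, A') = 0`.
-/

open CategoryTheory CategoryTheory.Limits CategoryTheory.Pretriangulated

universe v u

namespace WT

variable (C : Type u) [Category.{v} C] [Preadditive C] [HasZeroObject C]
  [HasShift C ℤ] [∀ n : ℤ, (shiftFunctor C n).Additive] [Pretriangulated C]

/-- `D ⊥ E`: every morphism from an object of `D` to an object of `E` vanishes. -/
def Perp (D E : Set C) : Prop :=
  ∀ ⦃X : C⦄, X ∈ D → ∀ ⦃Y : C⦄, Y ∈ E → ∀ f : X ⟶ Y, f = 0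

/-- The shift `D[n]` of a class of objects: objects isomorphic to `Y⟦n⟧` for `Y ∈ D`. -/
def shiftClass (D : Set C) (n : ℤ) : Set C :=
  {X : C | ∃ Y ∈ D, Nonempty (X ≅ (Y⟦n⟧ : C))}

/-- A class of objects is extension-stable if for any distinguished triangle
`A → B → C' → A⟦1⟧` with `A, C' ∈ D` one has `B ∈ D`. -/
def ExtensionStable (D : Set C) : Prop :=
  ∀ (T : Triangle C), T ∈ (distTriang C) → T.obj₁ ∈ D → T.obj₃ ∈ D → T.obj₂ ∈ D

/-- The envelope of a class of objects: the smallest extension-stable class containing it. -/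
def envelope (F : Set C) : Set C :=
  ⋂₀ {D : Set C | ExtensionStable C D ∧ F ⊆ D}

/-- A class of objects corresponding to a strictly full triangulated subcategory. -/
structure IsTriangulatedClass (S : Set C) : Prop where
  isoClosed : ∀ ⦃X Y : C⦄, (X ≅ Y) → X ∈ S → Y ∈ S
  shift : ∀ (n : ℤ) (X : C), X ∈ S → (X⟦n⟧ : C) ∈ S
  ext : ExtensionStable C S

/-- The smallest strictly full triangulated subcategory (as a class of objects)
containing a given class of objects. -/
def triangulatedHull (F : Set C) : Set C :=
  ⋂₀ {S : Set C | IsTriangulatedClass C S ∧ F ⊆ S}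

/-- A family `(A i)` of classes of objects is semi-orthogonal if
`Hom(X, Y⟦s⟧) = 0` for `X ∈ A i`, `Y ∈ A j` whenever `s < 0` or `s > i - j`. -/
def SemiOrthogonal (A : ℤ → Set C) : Prop :=
  ∀ i j s : ℤ, (s < 0 ∨ i - j < s) →
    ∀ ⦃X : C⦄, X ∈ A i → ∀ ⦃Y : C⦄, Y ∈ A j → ∀ f : X ⟶ (Y⟦s⟧ : C), f = 0

/-- Strong semi-orthogonality: semi-orthogonality together with `A i ⊥ A j` for `i ≠ j`. -/
def StronglySemiOrthogonal (A : ℤ → Set C) : Prop :=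
  SemiOrthogonal C A ∧ ∀ i j : ℤ, i ≠ j → Perp C (A i) (A j)

/-- The family `(A i)` is generating: the smallest strictly full triangulated subcategory
containing all the `A i` is the whole category. -/
def IsGenerating (A : ℤ → Set C) : Prop :=
  ∀ X : C, X ∈ triangulatedHull C (⋃ i : ℤ, A i)

end WT

namespace WT

/-- A category is abelian semi-simple if it carries an abelian structure for which every
object is a finite direct sum of simple objects. -/
def IsSemisimpleAbelian (B : Type*) [Category B] : Prop :=
  ∃ inst : Abelian B,
    haveI := inst
    haveI : HasFiniteBiproducts B := Abelian.hasFiniteBiproducts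
    ∀ X : B, ∃ (n : ℕ) (f : Fin n → B),
      (∀ l, Simple (f l)) ∧ Nonempty (X ≅ ⨁ f)

variable (C : Type u) [Category.{v} C] [Preadditive C] [HasZeroObject C]
  [HasShift C ℤ] [∀ n : ℤ, (shiftFunctor C n).Additive] [Pretriangulated C]

/-- A bounded t-structure, given by the classes `C^{t≤0}` and `C^{t≥0}`. -/
structure BoundedTStructure where
  le : Set C
  ge : Set C
  le_shift : ∀ X ∈ le, (X⟦(1 : ℤ)⟧ : C) ∈ le
  ge_shift : ∀ X ∈ ge, (X⟦(-1 : ℤ)⟧ : C) ∈ ge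
  orth : ∀ X ∈ le, ∀ Y ∈ ge, ∀ f : X ⟶ (Y⟦(-1 : ℤ)⟧ : C), f = 0
  decomp : ∀ X : C, ∃ (A B : C) (f : A ⟶ X) (g : X ⟶ B) (h : B ⟶ (A⟦(1 : ℤ)⟧ : C)),
    Triangle.mk f g h ∈ (distTriang C) ∧ A ∈ le ∧ B ∈ shiftClass C ge (-1)
  bounded_le : ∀ X : C, ∃ i : ℤ, X ∈ shiftClass C le (-i)
  bounded_ge : ∀ X : C, ∃ j : ℤ, X ∈ shiftClass C ge (-j)

variable {C}

/-- `C^{t≤i} := C^{t≤0}[-i]`. -/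
def BoundedTStructure.tle (t : BoundedTStructure C) (i : ℤ) : Set C :=
  shiftClass C t.le (-i)

/-- `C^{t≥i} := C^{t≥0}[-i]`. -/
def BoundedTStructure.tge (t : BoundedTStructure C) (i : ℤ) : Set C :=
  shiftClass C t.ge (-i)

/-- The heart of a t-structure. -/
def BoundedTStructure.heart (t : BoundedTStructure C) : Set C :=
  t.le ∩ t.ge

variable (C)

/-- A bounded weight structure (sign convention of the paper), given by the classes
`C^{w≤0}` and `C^{w≥0}`. -/
structure BoundedWeightStructure [HasBinaryBiproducts C] where
  le : Set C
  ge : Set C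
  le_sum : ∀ X ∈ le, ∀ Y ∈ le, (X ⊞ Y : C) ∈ le
  ge_sum : ∀ X ∈ ge, ∀ Y ∈ ge, (X ⊞ Y : C) ∈ ge
  le_retract : ∀ ⦃X Y : C⦄, (∃ (s : X ⟶ Y) (r : Y ⟶ X), s ≫ r = 𝟙 X) → Y ∈ le → X ∈ le
  ge_retract : ∀ ⦃X Y : C⦄, (∃ (s : X ⟶ Y) (r : Y ⟶ X), s ≫ r = 𝟙 X) → Y ∈ ge → X ∈ ge
  le_shift : ∀ X ∈ le, (X⟦(-1 : ℤ)⟧ : C) ∈ le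
  ge_shift : ∀ X ∈ ge, (X⟦(1 : ℤ)⟧ : C) ∈ ge
  orth : ∀ X ∈ le, ∀ Y ∈ ge, ∀ f : X ⟶ (Y⟦(1 : ℤ)⟧ : C), f = 0
  decomp : ∀ X : C, ∃ (A B : C) (f : A ⟶ X) (g : X ⟶ B) (h : B ⟶ (A⟦(1 : ℤ)⟧ : C)),
    Triangle.mk f g h ∈ (distTriang C) ∧ A ∈ le ∧ B ∈ shiftClass C ge 1
  bounded_le : ∀ X : C, ∃ i : ℤ, X ∈ shiftClass C le i
  bounded_ge : ∀ X : C, ∃ j : ℤ, X ∈ shiftClass C ge j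

variable {C} [HasBinaryBiproducts C]

/-- `C^{w≤i} := C^{w≤0}[i]`. -/
def BoundedWeightStructure.wle (w : BoundedWeightStructure C) (i : ℤ) : Set C :=
  shiftClass C w.le i

/-- `C^{w≥i} := C^{w≥0}[i]`. -/
def BoundedWeightStructure.wge (w : BoundedWeightStructure C) (i : ℤ) : Set C :=
  shiftClass C w.ge i

/-- A nice weight decomposition of `X` at level `i`: a weight decomposition
`w_{≤i}X → X → w_{≥i+1}X` all three of whose terms lie in the heart of `t`. -/
def NiceDecomposition (w : BoundedWeightStructure C) (t : BoundedTStructure C)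
    (i : ℤ) (X : C) : Prop :=
  ∃ (A B : C) (f : A ⟶ X) (g : X ⟶ B) (h : B ⟶ (A⟦(1 : ℤ)⟧ : C)),
    Triangle.mk f g h ∈ (distTriang C) ∧ A ∈ w.wle i ∧ B ∈ w.wge (i + 1) ∧
      A ∈ t.heart ∧ X ∈ t.heart ∧ B ∈ t.heart

/-- Condition (iv) of Theorem 1.1: every object of the heart of `t` admits a nice
weight decomposition at every level. -/
def ConditionIV (w : BoundedWeightStructure C) (t : BoundedTStructure C) : Prop :=
  ∀ X ∈ t.heart, ∀ i : ℤ, NiceDecomposition w t i X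

/-- The heart of `t` as a full subcategory. -/
abbrev Heart (t : BoundedTStructure C) := ObjectProperty.FullSubcategory (fun X : C => X ∈ t.heart)

/-- A morphism in the heart, viewed as a morphism of the ambient category. -/
def homC {P : C → Prop} {X Y : ObjectProperty.FullSubcategory P} (f : X ⟶ Y) : X.obj ⟶ Y.obj :=
  f.hom

/-- `0 → X → Y → Z → 0` is a short exact sequence in the heart of `t`; equivalently,
all three objects lie in the heart and the pair of morphisms extends to a
distinguished triangle. -/
def HeartSES (t : BoundedTStructure C) {X Y Z : C} (f : X ⟶ Y) (g : Y ⟶ Z) : Prop :=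
  X ∈ t.heart ∧ Y ∈ t.heart ∧ Z ∈ t.heart ∧
    ∃ h : Z ⟶ (X⟦(1 : ℤ)⟧ : C), Triangle.mk f g h ∈ (distTriang C)

/-- A functor from the heart to itself is exact if it preserves short exact sequences. -/
def HeartExact (t : BoundedTStructure C) (F : Heart t ⥤ Heart t) : Prop :=
  ∀ (X Y Z : Heart t) (f : X ⟶ Y) (g : Y ⟶ Z),
    HeartSES t (homC f) (homC g) → HeartSES t (homC (F.map f)) (homC (F.map g))

end WT

namespace CategoryTheory.Pretriangulated

variable {C : Type u} [Category.{v} C] [Preadditive C] [HasZeroObject C] [HasShift C ℤ]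
  [∀ n : ℤ, (CategoryTheory.shiftFunctor C n).Additive] [Pretriangulated C]
  {T T' : Triangle C}

lemma Triangle.yoneda_exact₁ (hT : T ∈ distTriang C) {Y : C} (u : T.obj₁ ⟶ Y)
    (hu : T.mor₃ ≫ u⟦(1 : ℤ)⟧' = 0) : ∃ v : T.obj₂ ⟶ Y, u = T.mor₁ ≫ v := by
  refine Triangle.yoneda_exact₂ _ (inv_rot_of_distTriang _ hT) u ?_
  -- up to the unit of the shift, `T.invRotate.mor₁ ≫ u` is `-(T.mor₃ ≫ u⟦1⟧')⟦-1⟧'`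
  have unit_naturality := (shiftFunctorCompIsoId C (1 : ℤ) (-1) (by omega)).hom.naturality u
  dsimp at unit_naturality
  change (-T.mor₃⟦(-1 : ℤ)⟧' ≫
    (shiftFunctorCompIsoId C (1 : ℤ) (-1) (by omega)).hom.app _) ≫ u = 0
  rw [Preadditive.neg_comp, neg_eq_zero, Category.assoc, ← unit_naturality,
    ← Functor.map_comp_assoc, hu, Functor.map_zero, zero_comp]

lemma Triangle.exists_hom_with_hom₁ (hT : T ∈ distTriang C) (hT' : T' ∈ distTriang C)
    (horth : ∀ φ : T.obj₃ ⟶ T'.obj₂⟦(1 : ℤ)⟧, φ = 0) (g : T.obj₁ ⟶ T'.obj₁) :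
    ∃ φ : T ⟶ T', φ.hom₁ = g := by
  obtain ⟨h, hh⟩ := Triangle.yoneda_exact₁ hT (g ≫ T'.mor₁) (horth _)
  exact ⟨completeDistinguishedTriangleMorphism T T' hT hT' g h hh.symm, rfl⟩

lemma Triangle.eq_of_mor₁_comp_eq (hT : T ∈ distTriang C) {Y : C}
    (hY : ∀ φ : T.obj₃ ⟶ Y, φ = 0) {u v : T.obj₂ ⟶ Y}
    (huv : T.mor₁ ≫ u = T.mor₁ ≫ v) : u = v := by
  obtain ⟨φ, hφ⟩ :=
    Triangle.yoneda_exact₂ _ hT (u - v) (by rw [Preadditive.comp_sub, huv, sub_self])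
  rw [← sub_eq_zero, hφ, hY φ, comp_zero]

end CategoryTheory.Pretriangulated

namespace WT

variable (C : Type u) [Category.{v} C] [Preadditive C] [HasZeroObject C]
  [HasShift C ℤ] [∀ n : ℤ, (shiftFunctor C n).Additive] [Pretriangulated C]

/-- Lemma 1.1(1): given distinguished triangles `T : X → A → B → X⟦1⟧` and
`T' : X' → A' → B' → X'⟦1⟧` with `Hom(B, A'⟦1⟧) = 0`, any morphism `g : X ⟶ X'`
extends to a morphism of triangles; if moreover `Hom(B, A') = 0`, the middle
component `h` is uniquely determined by `g`. -/
theorem extend_morphism_of_triangles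
    (X A B X' A' B' : C) (a : X ⟶ A) (f : A ⟶ B) (b : B ⟶ (X⟦(1 : ℤ)⟧ : C))
    (a' : X' ⟶ A') (f' : A' ⟶ B') (b' : B' ⟶ (X'⟦(1 : ℤ)⟧ : C))
    (hT : Triangle.mk a f b ∈ (distTriang C))
    (hT' : Triangle.mk a' f' b' ∈ (distTriang C))
    (horth : ∀ φ : B ⟶ ((A'⟦(1 : ℤ)⟧ : C)), φ = 0) (g : X ⟶ X') :
    (∃ (h : A ⟶ A') (i : B ⟶ B'),
      a ≫ h = g ≫ a' ∧ f ≫ i = h ≫ f' ∧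
        b ≫ (shiftFunctor C (1 : ℤ)).map g = i ≫ b') ∧
    ((∀ φ : B ⟶ A', φ = 0) → ∀ h₁ h₂ : A ⟶ A',
      (∃ i₁ : B ⟶ B', a ≫ h₁ = g ≫ a' ∧ f ≫ i₁ = h₁ ≫ f' ∧
        b ≫ (shiftFunctor C (1 : ℤ)).map g = i₁ ≫ b') →
      (∃ i₂ : B ⟶ B', a ≫ h₂ = g ≫ a' ∧ f ≫ i₂ = h₂ ≫ f' ∧
        b ≫ (shiftFunctor C (1 : ℤ)).map g = i₂ ≫ b') →
      h₁ = h₂) := by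
  refine ⟨?_, fun hBA' h₁ h₂ ⟨_, e₁, _⟩ ⟨_, e₂, _⟩ => ?_⟩
  · obtain ⟨φ, rfl⟩ := Triangle.exists_hom_with_hom₁ hT hT' horth g
    exact ⟨φ.hom₂, φ.hom₃, φ.comm₁, φ.comm₂, φ.comm₃⟩
  · exact Triangle.eq_of_mor₁_comp_eq hT hBA' (e₁.trans e₂.symm)

end WT
end

section
/- Let C be a triangulated category and (A_s)_{s∈ℤ} a semi-orthogonal family of full additive subcategories of C. For each s let C_s denote the smallest strictly full triangulated subcategory of C containing A_s. Then C_j ⊥ C_i for all i > j, i.e. Hom_C(X, Y) = 0 for all objects X of C_j and Y of C_i whenever i > j. -/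
open CategoryTheory CategoryTheory.Limits CategoryTheory.Pretriangulated

universe v u

/-!
Objects orthogonal to every shift of a fixed class form a triangulated class: closure under
isomorphisms and shifts is formal, and closure under extensions is the exactness of `Hom`
along a distinguished triangle. Semi-orthogonality with `j < i` says that `A j` is orthogonal
to all shifts of `A i`; minimality of the hulls lets this propagate first to the hull of `A i`
and then to the hull of `A j`, and the shift by `0` gives `C_j ⊥ C_i`.
-/

namespace WT

section ShiftOrthogonal

variable {C : Type u} [Category.{v} C] [Preadditive C] [HasShift C ℤ]

def rightShiftOrthogonal (D : Set C) : Set C :=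
  {Y | ∀ ⦃X⦄, X ∈ D → ∀ (n : ℤ) (f : X ⟶ (Y⟦n⟧ : C)), f = 0}

def leftShiftOrthogonal (E : Set C) : Set C :=
  {X | ∀ ⦃Y⦄, Y ∈ E → ∀ (n : ℤ) (f : X ⟶ (Y⟦n⟧ : C)), f = 0}

lemma subset_leftShiftOrthogonal_iff {D E : Set C} :
    D ⊆ leftShiftOrthogonal E ↔ E ⊆ rightShiftOrthogonal D :=
  ⟨fun h _ hY _ hX => h hX hY, fun h _ hX _ hY => h hY hX⟩

lemma perp_of_subset_leftShiftOrthogonal {D E : Set C} (h : D ⊆ leftShiftOrthogonal E) :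
    Perp C D E := fun X hX Y hY f => by
  simpa using h hX hY 0 (f ≫ (shiftFunctorZero C ℤ).inv.app Y)

end ShiftOrthogonal

variable {C : Type u} [Category.{v} C] [Preadditive C] [HasZeroObject C]
  [HasShift C ℤ] [∀ n : ℤ, (shiftFunctor C n).Additive] [Pretriangulated C]

lemma triangulatedHull_subset {F S : Set C} (hS : IsTriangulatedClass C S) (hF : F ⊆ S) :
    triangulatedHull C F ⊆ S :=
  Set.sInter_subset_of_mem ⟨hS, hF⟩

lemma isTriangulatedClass_rightShiftOrthogonal (D : Set C) :
    IsTriangulatedClass C (rightShiftOrthogonal D) where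
  isoClosed Y Y' e hY X hX n f := by
    simpa using hY hX n (f ≫ (shiftFunctor C n).map e.inv)
  shift m Y hY X hX n f := by
    simpa using hY hX (m + n) (f ≫ (shiftFunctorAdd C m n).inv.app Y)
  ext T hT h₁ h₃ X hX n f := by
    obtain ⟨g, rfl⟩ :=
      Triangle.coyoneda_exact₂ _ (Triangle.shift_distinguished T hT n) f (h₃ hX n _)
    rw [show g = 0 from h₁ hX n g]
    exact zero_comp

lemma isTriangulatedClass_leftShiftOrthogonal (E : Set C) :
    IsTriangulatedClass C (leftShiftOrthogonal E) where
  isoClosed X X' e hX Y hY n f := by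
    simpa using hX hY n (e.hom ≫ f)
  shift m X hX Y hY n f := by
    apply (shiftFunctor C (-m)).map_injective
    let unshiftX : X ≅ (X⟦m⟧⟦-m⟧ : C) :=
      (shiftFunctorCompIsoId C m (-m) (add_neg_cancel m)).symm.app X
    let combineY : (Y⟦n⟧⟦-m⟧ : C) ≅ Y⟦n - m⟧ :=
      (shiftFunctorAdd' C n (-m) (n - m) (sub_eq_add_neg n m).symm).symm.app Y
    simpa [unshiftX, combineY] using
      hX hY (n - m) (unshiftX.hom ≫ (shiftFunctor C (-m)).map f ≫ combineY.hom)
  ext T hT h₁ h₃ Y hY n f := by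
    obtain ⟨g, rfl⟩ := Triangle.yoneda_exact₂ T hT f (h₁ hY n _)
    rw [h₃ hY n g, comp_zero]

end WT

namespace WT

variable (C : Type u) [Category.{v} C] [Preadditive C] [HasZeroObject C]
  [HasShift C ℤ] [∀ n : ℤ, (shiftFunctor C n).Additive] [Pretriangulated C]

/-- Lemma 1.4(I): for a semi-orthogonal family `(A s)`, the triangulated
subcategories `C_s` generated by the `A s` satisfy `C_j ⊥ C_i` for `i > j`. -/
theorem hull_semiorthogonal (A : ℤ → Set C) (hA : SemiOrthogonal C A) :
    ∀ i j : ℤ, j < i →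
      Perp C (triangulatedHull C (A j)) (triangulatedHull C (A i)) := by
  intro i j hij
  have hAi : A i ⊆ rightShiftOrthogonal (A j) := fun Y hY X hX n f =>
    hA j i n (by omega) hX hY f
  have hHulli : triangulatedHull C (A i) ⊆ rightShiftOrthogonal (A j) :=
    triangulatedHull_subset (isTriangulatedClass_rightShiftOrthogonal _) hAi
  apply perp_of_subset_leftShiftOrthogonal
  exact triangulatedHull_subset (isTriangulatedClass_leftShiftOrthogonal _)
    (subset_leftShiftOrthogonal_iff.2 hHulli)

end WT
end
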